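/- arXiv:2504.01808 — 3 statements merged into one kernel-verified Lean document; each statement's English description precedes it below -/
import Mathlib

section
/- Let G be a simple graph of girth at least 5 with no odd hole of length at least 9, let C = v_1 v_2 ⋯ v_7 v_1 be a 7-hole of G, and let u be a vertex of G not on C that has a neighbor on C. Then either u has exactly one neighbor on C, or the set of neighbors of u on C equals {v_i, v_{i+3}} for some 1 ≤ i ≤ 7 (indices taken modulo 7). -/
/-!
Two neighbours `v i`, `v j` of `u` on the 7-hole cannot be consecutive on it (that would
close a triangle) nor at distance 2 (a 4-cycle), so their indices differ by 3 or 4 modulo 7. Among any three residues modulo 7 some two differ by 1 or 2,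
so `u` has at most two neighbours on the hole, and if two, they are `v i` and `v (i + 3)`.
-/

open SimpleGraph

/-- `G` has an induced cycle of length `n` (a hole, when `n ≥ 4`). -/
def SimpleGraph.HasInducedCycle {V : Type*} (G : SimpleGraph V) (n : ℕ) : Prop :=
  ∃ (v : V) (w : G.Walk v v), w.IsCycle ∧ w.length = n ∧ w.toSubgraph.IsInduced

namespace SimpleGraph

variable {V : Type*} {G : SimpleGraph V}

lemma not_adj_of_four_le_egirth (h : 4 ≤ G.egirth) {a b c : V} (hab : G.Adj a b)
    (hbc : G.Adj b c) : ¬ G.Adj c a := by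
  intro hca
  let w : G.Walk a a := .cons hab (.cons hbc (.cons hca .nil))
  have hw : w.IsCycle := by
    simp [w, Walk.isCycle_def, Walk.isTrail_def, hab.ne, hbc.ne, hca.ne, hab.ne', hca.ne',
      Sym2.eq, Sym2.rel_iff']
  have := h.trans (egirth_le_length hw)
  norm_num [w] at this

lemma not_adj_of_five_le_egirth (h : 5 ≤ G.egirth) {a b c d : V} (hac : a ≠ c) (hbd : b ≠ d)
    (hab : G.Adj a b) (hbc : G.Adj b c) (hcd : G.Adj c d) : ¬ G.Adj d a := by
  intro hda
  let w : G.Walk a a := .cons hab (.cons hbc (.cons hcd (.cons hda .nil)))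
  have hw : w.IsCycle := by
    simp [w, Walk.isCycle_def, Walk.isTrail_def, hab.ne, hbc.ne, hcd.ne, hda.ne, hab.ne',
      hda.ne', hac, hbd, hac.symm, Sym2.eq, Sym2.rel_iff']
  have := h.trans (egirth_le_length hw)
  norm_num [w] at this

section Cycle

variable {n : ℕ} [NeZero n] {v : Fin n → V} {u : V}

lemma sub_ne_one_of_adj_of_adj (h : 4 ≤ G.egirth) (hcyc : ∀ i, G.Adj (v i) (v (i + 1)))
    {i j : Fin n} (hi : G.Adj u (v i)) (hj : G.Adj u (v j)) : j - i ≠ 1 := by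
  intro hji
  obtain rfl : j = i + 1 := by rw [← hji, add_sub_cancel]
  exact not_adj_of_four_le_egirth h hi (hcyc i) hj.symm

lemma sub_ne_two_of_adj_of_adj (h : 5 ≤ G.egirth) (hn : 2 < n) (hinj : Function.Injective v)
    (hcyc : ∀ i, G.Adj (v i) (v (i + 1))) (hu : ∀ i, u ≠ v i)
    {i j : Fin n} (hi : G.Adj u (v i)) (hj : G.Adj u (v j)) : j - i ≠ 2 := by
  intro hji
  have hij : i ≠ j := by
    rintro rfl
    simp [Fin.ext_iff, Nat.mod_eq_of_lt hn] at hji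
  obtain rfl : j = i + 1 + 1 := by grind
  exact not_adj_of_five_le_egirth h (hu (i + 1)) (hinj.ne hij) hi (hcyc i) (hcyc (i + 1)) hj.symm

end Cycle

section Heptagon

variable {v : Fin 7 → V} {u : V}

lemma eq_add_three_or_eq_add_three_of_adj_of_adj (h : 5 ≤ G.egirth)
    (hinj : Function.Injective v) (hcyc : ∀ i, G.Adj (v i) (v (i + 1))) (hu : ∀ i, u ≠ v i)
    {i j : Fin 7} (hij : i ≠ j) (hi : G.Adj u (v i)) (hj : G.Adj u (v j)) :
    j = i + 3 ∨ i = j + 3 := by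
  have h4 : 4 ≤ G.egirth := le_trans (by norm_num) h
  have hFin7 : ∀ i j : Fin 7, i ≠ j → j - i ≠ 1 → i - j ≠ 1 → j - i ≠ 2 → i - j ≠ 2 →
      j = i + 3 ∨ i = j + 3 := by decide
  exact hFin7 i j hij (sub_ne_one_of_adj_of_adj h4 hcyc hi hj)
    (sub_ne_one_of_adj_of_adj h4 hcyc hj hi)
    (sub_ne_two_of_adj_of_adj h (by norm_num) hinj hcyc hu hi hj)
    (sub_ne_two_of_adj_of_adj h (by norm_num) hinj hcyc hu hj hi)

lemma setOf_adj_eq_pair_of_adj_of_adj_add_three (h : 5 ≤ G.egirth)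
    (hinj : Function.Injective v) (hcyc : ∀ i, G.Adj (v i) (v (i + 1))) (hu : ∀ i, u ≠ v i)
    {i : Fin 7} (hi : G.Adj u (v i)) (hi3 : G.Adj u (v (i + 3))) :
    {k | G.Adj u (v k)} = ({i, i + 3} : Set (Fin 7)) := by
  ext k
  simp only [Set.mem_ofPred_eq, Set.mem_insert_iff, Set.mem_singleton_iff]
  refine ⟨fun hk => ?_, by rintro (rfl | rfl) <;> assumption⟩
  by_contra! hne
  have hFin7 : ∀ i k : Fin 7, k ≠ i → k ≠ i + 3 → (k = i + 3 ∨ i = k + 3) →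
      ¬ (k = i + 3 + 3 ∨ i + 3 = k + 3) := by decide
  exact hFin7 i k hne.1 hne.2
    (eq_add_three_or_eq_add_three_of_adj_of_adj h hinj hcyc hu (Ne.symm hne.1) hi hk)
    (eq_add_three_or_eq_add_three_of_adj_of_adj h hinj hcyc hu (Ne.symm hne.2) hi3 hk)

end Heptagon

end SimpleGraph

theorem stmt_4_general {V : Type*} (G : SimpleGraph V)
    (hgirth : (5 : ℕ∞) ≤ G.egirth)
    (v : Fin 7 → V) (hinj : Function.Injective v)
    (hcyc : ∀ i : Fin 7, G.Adj (v i) (v (i + 1)))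
    (u : V) (hu : ∀ i : Fin 7, u ≠ v i) (hadj : ∃ i : Fin 7, G.Adj u (v i)) :
    (∃! i : Fin 7, G.Adj u (v i)) ∨
      (∃ i : Fin 7, {j : Fin 7 | G.Adj u (v j)} = ({i, i + 3} : Set (Fin 7))) := by
  obtain ⟨i, hi⟩ := hadj
  by_cases huniq : ∀ j, G.Adj u (v j) → j = i
  · exact Or.inl ⟨i, hi, huniq⟩
  push Not at huniq
  obtain ⟨j, hj, hji⟩ := huniq
  right
  rcases eq_add_three_or_eq_add_three_of_adj_of_adj hgirth hinj hcyc hu hji.symm hi hj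
    with rfl | rfl
  · exact ⟨i, setOf_adj_eq_pair_of_adj_of_adj_add_three hgirth hinj hcyc hu hi hj⟩
  · exact ⟨j, setOf_adj_eq_pair_of_adj_of_adj_add_three hgirth hinj hcyc hu hj hi⟩

/-- In a graph of girth at least 5 with no odd hole of length at least 9, a vertex `u` not
on a 7-hole `v_0 v_1 ⋯ v_6 v_0` with a neighbour on the hole either has exactly one
neighbour on the hole, or its neighbours on the hole are exactly `{v_i, v_{i+3}}`
for some `i` (indices modulo 7). -/
theorem stmt_4 {V : Type*} [Fintype V] (G : SimpleGraph V)
    (hgirth : (5 : ℕ∞) ≤ G.egirth)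
    (hodd : ∀ n : ℕ, Odd n → 9 ≤ n → ¬ G.HasInducedCycle n)
    (v : Fin 7 → V) (hinj : Function.Injective v)
    (hcyc : ∀ i : Fin 7, G.Adj (v i) (v (i + 1)))
    (hind : ∀ i j : Fin 7, G.Adj (v i) (v j) → j = i + 1 ∨ i = j + 1)
    (u : V) (hu : ∀ i : Fin 7, u ≠ v i) (hadj : ∃ i : Fin 7, G.Adj u (v i)) :
    (∃! i : Fin 7, G.Adj u (v i)) ∨
      (∃ i : Fin 7, {j : Fin 7 | G.Adj u (v j)} = ({i, i + 3} : Set (Fin 7))) :=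
  stmt_4_general G hgirth v hinj hcyc u hu hadj
end

section
/- Let G be a simple graph of girth at least 5 with no odd hole of length at least 9, let (L_0, …, L_k) be a stable levelling of G, let H be an induced subgraph of G[L_k], let z ∈ V(H), and let A be the set of all vertices v ∈ N_H^3(z) such that every parent of v in L_{k-1} is adjacent to z. Then χ(H[A]) ≤ 2. -/
open SimpleGraph

/-- `(L 0, …, L k)` is a levelling of `G`: disjoint vertex subsets, `L 0` a singleton,
every vertex of `L i` (for `1 ≤ i ≤ k`) has a neighbour in `L (i-1)` and no neighbour
in `L h` for `h ≤ i - 2`. -/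
def SimpleGraph.IsLevelling {V : Type*} (G : SimpleGraph V) (L : ℕ → Set V) (k : ℕ) : Prop :=
  (∀ i, i ≤ k → ∀ j, j ≤ k → i ≠ j → Disjoint (L i) (L j)) ∧
  (∃ v₀ : V, L 0 = {v₀}) ∧
  (∀ i, 1 ≤ i → i ≤ k → ∀ v ∈ L i,
    (∃ u ∈ L (i - 1), G.Adj u v) ∧ (∀ h, h + 2 ≤ i → ∀ u ∈ L h, ¬ G.Adj u v))

/-- A levelling is stable if `L i` is a stable (independent) set for `0 ≤ i ≤ k - 1`. -/
def SimpleGraph.IsStableLevelling {V : Type*} (G : SimpleGraph V) (L : ℕ → Set V) (k : ℕ) :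
    Prop :=
  G.IsLevelling L k ∧ ∀ i, i < k → ∀ u ∈ L i, ∀ v ∈ L i, ¬ G.Adj u v

/-
An odd closed walk in `H[A]` contains an odd induced cycle `C`, so it suffices to exclude those.
A triangle contradicts the girth, and if `|C| ≥ 9` then `C` is an odd hole of `G`. For
`|C| ∈ {5, 7}`, all vertices of `C` lie in `L k` and all their parents are adjacent to `z`;
choosing parents `x, y` of suitable vertices of `C` yields an induced path
`x - c₀ - c₁ - c₂ - c₃ - y` with `cᵢ ∈ C`. A shortest `y`–`x` path through `x`, `y` and the levels
below `k - 1` is induced, has even length since the levelling is stable, and has length at least 4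
since `x`, `y` have the common neighbour `z` and `G` has no 4-cycle. Gluing the two paths gives an
odd hole of length at least 9.
-/

namespace SimpleGraph

variable {V W : Type*} {G : SimpleGraph V} {H : SimpleGraph W}

section Girth

variable {a b c d : V}

lemma not_adj_of_adj_adj (hg : 5 ≤ G.egirth) (hab : G.Adj a b) (hbc : G.Adj b c) :
    ¬G.Adj c a := fun hca => by
  have hw : (Walk.cons hab (.cons hbc (.cons hca .nil))).IsCycle := by
    simp [Walk.isCycle_def, Walk.isTrail_def, hab.ne, hab.ne.symm, hbc.ne, hca.ne, hca.ne.symm]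
  have := hg.trans (egirth_le_length hw)
  norm_num at this

lemma not_adj_of_adj_adj_adj (hg : 5 ≤ G.egirth) (hab : G.Adj a b) (hbc : G.Adj b c)
    (hcd : G.Adj c d) (hac : a ≠ c) (hbd : b ≠ d) : ¬G.Adj d a := fun hda => by
  have hw : (Walk.cons hab (.cons hbc (.cons hcd (.cons hda .nil)))).IsCycle := by
    simp [Walk.isCycle_def, Walk.isTrail_def, hab.ne, hab.ne.symm, hbc.ne, hcd.ne, hda.ne,
      hac, hbd, hac.symm, hda.ne.symm]
  have := hg.trans (egirth_le_length hw)
  norm_num at this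

lemma eq_of_adj_of_adj (hg : 5 ≤ G.egirth) (hab : a ≠ b) (hac : G.Adj a c) (hbc : G.Adj b c)
    (had : G.Adj a d) (hbd : G.Adj b d) : c = d := by
  by_contra hcd
  exact not_adj_of_adj_adj_adj hg hac hbc.symm hbd hab hcd had.symm

end Girth

namespace Walk

variable {u v w : V}

lemma isInduced_toSubgraph_map (f : G ↪g H) {p : G.Walk u v} (hp : p.toSubgraph.IsInduced) :
    (p.map f.toHom).toSubgraph.IsInduced := by
  rw [toSubgraph_map]
  rintro _ ⟨a, ha, rfl⟩ _ ⟨b, hb, rfl⟩ hab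
  exact ⟨a, b, hp ha hb (f.map_adj_iff.mp hab), rfl, rfl⟩

lemma isInduced_toSubgraph_append {p : G.Walk u v} {q : G.Walk v w}
    (hp : p.toSubgraph.IsInduced) (hq : q.toSubgraph.IsInduced)
    (hpq : ∀ a ∈ p.support, ∀ b ∈ q.support, G.Adj a b → a ∈ q.support ∨ b ∈ p.support) :
    (p.append q).toSubgraph.IsInduced := by
  intro a ha b hb hab
  simp only [toSubgraph_append, Subgraph.verts_sup, Set.mem_union, mem_verts_toSubgraph,
    Subgraph.sup_adj] at ha hb ⊢
  have hp' := fun ha hb => hp (p.mem_verts_toSubgraph.mpr ha) (p.mem_verts_toSubgraph.mpr hb) hab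
  have hq' := fun ha hb => hq (q.mem_verts_toSubgraph.mpr ha) (q.mem_verts_toSubgraph.mpr hb) hab
  rcases ha with ha | ha <;> rcases hb with hb | hb
  · exact .inl (hp' ha hb)
  · rcases hpq a ha b hb hab with ha' | hb'
    exacts [.inr (hq' ha' hb), .inl (hp' ha hb')]
  · rcases hpq b hb a ha hab.symm with hb' | ha'
    exacts [.inr (hq' ha hb'), .inl (hp' ha' hb)]
  · exact .inr (hq' ha hb)

lemma isInduced_toSubgraph_of_length_eq_dist {p : G.Walk u v} (hp : p.length = G.dist u v) :
    p.toSubgraph.IsInduced := by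
  suffices key : ∀ i j, i < j → j ≤ p.length → G.Adj (p.getVert i) (p.getVert j) →
      p.toSubgraph.Adj (p.getVert i) (p.getVert j) by
    intro a ha b hb hab
    obtain ⟨i, rfl, hi⟩ := p.mem_support_iff_exists_getVert.mp (p.mem_verts_toSubgraph.mp ha)
    obtain ⟨j, rfl, hj⟩ := p.mem_support_iff_exists_getVert.mp (p.mem_verts_toSubgraph.mp hb)
    rcases lt_trichotomy i j with hij | rfl | hij
    · exact key i j hij hj hab
    · exact absurd hab (G.loopless.irrefl _)
    · exact (key j i hij hi hab.symm).symm
  intro i j hij hj hadj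
  have hshort := dist_le (((p.take i).concat hadj).append (p.drop j))
  simp only [length_append, length_concat, take_length, drop_length] at hshort
  obtain rfl : j = i + 1 := by omega
  exact p.toSubgraph_adj_getVert (by omega)

lemma getVert_mod_length (w : G.Walk u u) {i : ℕ} (hi : i ≤ w.length) :
    w.getVert (i % w.length) = w.getVert i := by
  rcases hi.lt_or_eq with hi | rfl
  · rw [Nat.mod_eq_of_lt hi]
  · rw [Nat.mod_self, getVert_zero, getVert_length]

lemma IsPath.start_notMem_support_tail {p : G.Walk u v} (hp : p.IsPath) :
    u ∉ p.support.tail := by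
  have := hp.support_nodup
  rw [← cons_tail_support] at this
  exact (List.nodup_cons.mp this).1

lemma IsPath.hasInducedCycle_append {p : G.Walk u v} {q : G.Walk v u} (hp : p.IsPath)
    (hq : q.IsPath) (hpi : p.toSubgraph.IsInduced) (hqi : q.toSubgraph.IsInduced)
    (hp1 : 1 < p.length) (hpq : ∀ a ∈ p.support, ∀ b ∈ q.support, a ≠ u → a ≠ v → b ≠ u → b ≠ v →
      a ≠ b ∧ ¬G.Adj a b) :
    G.HasInducedCycle (p.length + q.length) := by
  refine ⟨u, p.append q, hp.isCycle_append hq (fun x hxp hxq => ?_) (.inl hp1),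
    length_append .., isInduced_toSubgraph_append hpi hqi fun a ha b hb hab => ?_⟩
  · have hxu : x ≠ u := fun h => hp.start_notMem_support_tail (h ▸ hxp)
    have hxv : x ≠ v := fun h => hq.start_notMem_support_tail (h ▸ hxq)
    exact (hpq x (List.mem_of_mem_tail hxp) x (List.mem_of_mem_tail hxq) hxu hxv hxu hxv).1 rfl
  by_cases hau : a = u
  · exact .inl (hau ▸ q.end_mem_support)
  by_cases hav : a = v
  · exact .inl (hav ▸ q.start_mem_support)
  by_cases hbu : b = u
  · exact .inr (hbu ▸ p.start_mem_support)
  by_cases hbv : b = v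
  · exact .inr (hbv ▸ p.end_mem_support)
  exact absurd hab (hpq a ha b hb hau hav hbu hbv).2

lemma two_le_length_of_not_toSubgraph_adj {a b : V} (q : G.Walk a b) (hab : a ≠ b)
    (h : ¬q.toSubgraph.Adj a b) : 2 ≤ q.length := by
  by_contra! hlt
  interval_cases hq : q.length
  · exact hab (eq_of_length_eq_zero hq)
  · have := q.toSubgraph_adj_getVert (i := 0) (by omega)
    rw [getVert_zero, q.getVert_of_length_le hq.le] at this
    exact h this

lemma exists_odd_shorter_of_not_nodup (w : G.Walk u u) (hw : Odd w.length)
    (h : ¬w.support.tail.Nodup) :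
    ∃ (v : V) (c : G.Walk v v), Odd c.length ∧ c.length < w.length := by
  classical
  -- rotate `w` to a repeated vertex `x` and cut it at its first return to `x`
  obtain ⟨x, hdup⟩ := List.exists_duplicate_iff_not_nodup.mpr h
  have hx : x ∈ w.support := List.mem_of_mem_tail hdup.mem
  have hcount : 2 ≤ (w.rotate x hx).support.tail.count x := by
    rw [(w.support_rotate x hx).perm.count_eq]
    exact List.duplicate_iff_two_le_count.mp hdup
  have hlen : (w.rotate x hx).length = w.length := length_rotate ..
  generalize w.rotate x hx = w₁ at hcount hlen
  cases w₁ with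
  | nil => simp at hcount
  | @cons _ y _ hxy p =>
    have hxp : x ∈ p.support := List.count_pos_iff.mp (by simp at hcount; omega)
    have hsplit := congrArg length (p.take_spec hxp)
    have hdrop : 1 ≤ (p.dropUntil x hxp).length := by
      by_contra! h0
      have htail : (p.dropUntil x hxp).support.tail = [] := by
        rw [← List.length_eq_zero_iff, List.length_tail, length_support]; omega
      have hsup := congrArg (·.support.count x) (p.take_spec hxp)
      simp only [support_append, List.count_append, p.count_support_takeUntil_eq_one hxp,
        htail, List.count_nil] at hsup
      simp only [support_cons, List.tail_cons] at hcount
      omega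
    simp only [length_append, length_cons] at hsplit hlen
    rcases Nat.even_or_odd (p.dropUntil x hxp).length with he | ho
    · refine ⟨x, cons hxy (p.takeUntil x hxp), ?_, by simp; omega⟩
      obtain ⟨a, ha⟩ := he
      obtain ⟨b, hb⟩ := hw
      exact ⟨b - a, by rw [length_cons]; omega⟩
    · exact ⟨x, _, ho, by omega⟩

lemma exists_odd_shorter_of_not_isInduced (w : G.Walk u u) (hw : Odd w.length)
    (h : ¬w.toSubgraph.IsInduced) :
    ∃ (v : V) (c : G.Walk v v), Odd c.length ∧ c.length < w.length := by
  classical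
  -- rotate `w` to `a` and cut it at `b`; closing both halves with the chord `ab` gives two
  -- closed walks of total length `w.length + 2`, both shorter than `w` since `ab ∉ w.edges`
  simp only [Subgraph.IsInduced, mem_verts_toSubgraph, not_forall] at h
  obtain ⟨a, ha, b, hb, hab, hchord⟩ := h
  have hb' : b ∈ (w.rotate a ha).support := (w.mem_support_rotate_iff a ha).mpr hb
  have hchord' : ¬(w.rotate a ha).toSubgraph.Adj a b := by rwa [toSubgraph_rotate]
  have hlen : (w.rotate a ha).length = w.length := length_rotate ..
  generalize w.rotate a ha = w₁ at hb' hchord' hlen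
  have hsplit := congrArg length (w₁.take_spec hb')
  have hchord₁ : ¬(w₁.takeUntil b hb').toSubgraph.Adj a b := fun h' =>
    hchord' (by rw [← w₁.take_spec hb', toSubgraph_append]; exact .inl h')
  have hchord₂ : ¬(w₁.dropUntil b hb').toSubgraph.Adj b a := fun h' =>
    hchord' (by rw [← w₁.take_spec hb', toSubgraph_append]; exact .inr h'.symm)
  have h₁ := two_le_length_of_not_toSubgraph_adj _ hab.ne hchord₁
  have h₂ := two_le_length_of_not_toSubgraph_adj _ hab.ne.symm hchord₂
  rw [length_append] at hsplit
  rcases Nat.even_or_odd ((w₁.takeUntil b hb').concat hab.symm).length with he | ho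
  · refine ⟨b, (w₁.dropUntil b hb').concat hab, ?_, by rw [length_concat]; omega⟩
    obtain ⟨c, hc⟩ := he
    obtain ⟨d, hd⟩ := hw
    exact ⟨d + 1 - c, by rw [length_concat] at hc ⊢; omega⟩
  · exact ⟨a, _, ho, by rw [length_concat]; omega⟩

lemma exists_odd_hasInducedCycle (w : G.Walk u u) (hw : Odd w.length) :
    ∃ n, Odd n ∧ G.HasInducedCycle n := by
  induction hN : w.length using Nat.strong_induction_on generalizing u with
  | _ N ih =>
  subst hN
  by_cases hnodup : w.support.tail.Nodup
  · by_cases hind : w.toSubgraph.IsInduced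
    · have hnil : ¬w.Nil := fun h => by simp [h.length_eq_zero] at hw
      have hne1 : w.length ≠ 1 := fun h1 => by
        have := w.adj_getVert_succ (i := 0) (by omega)
        rw [getVert_zero, w.getVert_of_length_le h1.le] at this
        exact G.loopless.irrefl _ this
      refine ⟨w.length, hw, u, w, ?_, rfl, hind⟩
      refine isCycle_iff_isPath_tail_and_le_length.mpr ⟨.mk' ?_, ?_⟩
      · rwa [support_tail_of_not_nil _ hnil]
      · obtain ⟨t, ht⟩ := hw
        omega
    · obtain ⟨v, c, hc, hlt⟩ := exists_odd_shorter_of_not_isInduced w hw hind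
      exact ih _ hlt c hc rfl
  · obtain ⟨v, c, hc, hlt⟩ := exists_odd_shorter_of_not_nodup w hw hnodup
    exact ih _ hlt c hc rfl

end Walk

lemma cycleGraph_adj_iff_val {m : ℕ} {i j : Fin (m + 2)} :
    (cycleGraph (m + 2)).Adj i j ↔
      i.val = (j.val + 1) % (m + 2) ∨ j.val = (i.val + 1) % (m + 2) := by
  simp only [cycleGraph_adj, sub_eq_iff_eq_add, Fin.ext_iff, Fin.val_add, Fin.val_one, add_comm 1]

lemma HasInducedCycle.three_le {n : ℕ} (h : G.HasInducedCycle n) : 3 ≤ n := by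
  obtain ⟨u, w, hc, rfl, -⟩ := h
  exact hc.three_le_length

lemma HasInducedCycle.map (f : G ↪g H) {n : ℕ} (h : G.HasInducedCycle n) :
    H.HasInducedCycle n := by
  obtain ⟨u, w, hc, hlen, hind⟩ := h
  exact ⟨f u, w.map f.toHom, (Walk.isCycle_map_iff_of_injective f.injective).mpr hc,
    by simpa using hlen, Walk.isInduced_toSubgraph_map f hind⟩

lemma HasInducedCycle.cycleGraph_isIndContained {n : ℕ} (h : G.HasInducedCycle n) :
    cycleGraph n ⊴ G := by
  obtain ⟨u, w, hc, hlen, hind⟩ := h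
  obtain ⟨m, rfl⟩ : ∃ m, n = m + 2 := ⟨n - 2, by have := hc.three_le_length; omega⟩
  have hinj : ∀ i j : ℕ, i < m + 2 → j < m + 2 → w.getVert i = w.getVert j → i = j :=
    fun i j hi hj => hc.getVert_injOn' (by simp; omega) (by simp; omega)
  refine ⟨⟨⟨fun i => w.getVert i, fun i j h => Fin.ext (hinj _ _ i.2 j.2 h)⟩, ?_⟩⟩
  intro i j
  have hsucc : ∀ t < m + 2, w.getVert ((t + 1) % (m + 2)) = w.getVert (t + 1) := by
    intro t ht
    have := w.getVert_mod_length (i := t + 1) (by omega)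
    rwa [hlen] at this
  have hadj : ∀ t < m + 2, G.Adj (w.getVert t) (w.getVert ((t + 1) % (m + 2))) :=
    fun t ht => hsucc t ht ▸ w.adj_getVert_succ (by omega)
  simp only [cycleGraph_adj_iff_val]
  refine ⟨fun hij => ?_, ?_⟩
  · obtain ⟨t, hts, ht⟩ := w.toSubgraph_adj_iff.mp
      (hind (w.mem_verts_toSubgraph.mpr (w.getVert_mem_support _))
        (w.mem_verts_toSubgraph.mpr (w.getVert_mem_support _)) hij)
    rw [← hsucc t (by omega), Sym2.eq_iff] at hts
    have hmod := Nat.mod_lt (t + 1) (show 0 < m + 2 by omega)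
    rcases hts with ⟨h₁, h₂⟩ | ⟨h₁, h₂⟩
    · obtain rfl : t = i := hinj _ _ (by omega) i.2 h₁
      exact .inr (hinj _ _ j.2 hmod h₂.symm)
    · obtain rfl : t = j := hinj _ _ (by omega) j.2 h₁
      exact .inl (hinj _ _ i.2 hmod h₂.symm)
  · rintro (h | h)
    · have := hadj j j.2
      rw [← h] at this
      exact this.symm
    · have := hadj i i.2
      rwa [← h] at this

section Levelling

variable {L : ℕ → Set V} {k : ℕ} {u v : V} {a b : ℕ}

lemma IsLevelling.eq_of_mem (hL : G.IsLevelling L k) (ha : u ∈ L a) (hb : u ∈ L b)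
    (hak : a ≤ k) (hbk : b ≤ k) : a = b := by
  by_contra hab
  exact Set.disjoint_left.mp (hL.1 a hak b hbk hab) ha hb

lemma IsLevelling.ne_of_mem (hL : G.IsLevelling L k) (hu : u ∈ L a) (hv : v ∈ L b)
    (hak : a ≤ k) (hbk : b ≤ k) (hab : a ≠ b) : u ≠ v := by
  rintro rfl
  exact hab (hL.eq_of_mem hu hv hak hbk)

lemma IsLevelling.exists_parent (hL : G.IsLevelling L k) (hv : v ∈ L b) (hb : 1 ≤ b)
    (hbk : b ≤ k) : ∃ u ∈ L (b - 1), G.Adj u v :=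
  (hL.2.2 b hb hbk v hv).1

lemma IsLevelling.not_adj_of_add_two_le (hL : G.IsLevelling L k) (hu : u ∈ L a) (hv : v ∈ L b)
    (hab : a + 2 ≤ b) (hbk : b ≤ k) : ¬G.Adj u v :=
  (hL.2.2 b (by omega) hbk v hv).2 a hab u hu

lemma IsLevelling.eq_of_mem_zero (hL : G.IsLevelling L k) (hu : u ∈ L 0) (hv : v ∈ L 0) :
    u = v := by
  obtain ⟨v₀, h0⟩ := hL.2.1
  rw [h0] at hu hv
  exact hu.trans hv.symm

lemma IsLevelling.two_le_of_ne (hL : G.IsLevelling L k) (hu : u ∈ L (k - 1)) (hv : v ∈ L (k - 1))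
    (huv : u ≠ v) : 2 ≤ k := by
  by_contra! hk
  rw [show k - 1 = 0 by omega] at hu hv
  exact huv (hL.eq_of_mem_zero hu hv)

lemma IsStableLevelling.eq_add_one_or_eq_add_one_of_adj (hL : G.IsStableLevelling L k) (hu : u ∈ L a) (hv : v ∈ L b)
    (hak : a < k) (hbk : b < k) (huv : G.Adj u v) : b = a + 1 ∨ a = b + 1 := by
  rcases lt_trichotomy a b with hab | rfl | hab
  · by_contra! h
    exact hL.1.not_adj_of_add_two_le hu hv (by omega) hbk.le huv
  · exact absurd huv (hL.2 a hak u hu v hv)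
  · by_contra! h
    exact hL.1.not_adj_of_add_two_le hv hu (by omega) hak.le huv.symm

lemma IsStableLevelling.even_length_add (hL : G.IsStableLevelling L k) (w : G.Walk u v)
    (hw : ∀ x ∈ w.support, ∃ h < k, x ∈ L h) (hu : u ∈ L a) (hv : v ∈ L b) (hak : a < k)
    (hbk : b < k) : Even (w.length + a + b) := by
  induction w generalizing a with
  | nil =>
    obtain rfl := hL.1.eq_of_mem hu hv hak.le hbk.le
    exact ⟨a, by simp⟩
  | @cons u u' v huu' w ih =>
    obtain ⟨a', ha'k, hu'⟩ := hw u' (by simp)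
    obtain ⟨c, hc⟩ := ih (fun x hx => hw x (by simp [hx])) hu' hv ha'k
    rw [Walk.length_cons]
    rcases hL.eq_add_one_or_eq_add_one_of_adj hu hu' hak ha'k huu' with rfl | rfl
    exacts [⟨c, by omega⟩, ⟨c + 1, by omega⟩]

lemma IsLevelling.induce_reachable (hL : G.IsLevelling L k) {U : Set V} {n : ℕ} (hnk : n ≤ k)
    (hU : ∀ h ≤ n, L h ⊆ U) {u v : U} (hu : ∃ h ≤ n, u.1 ∈ L h) (hv : ∃ h ≤ n, v.1 ∈ L h) :
    (G.induce U).Reachable u v := by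
  obtain ⟨v₀, h0⟩ := hL.2.1
  have hv₀ : v₀ ∈ U := hU 0 (Nat.zero_le _) (h0 ▸ rfl)
  suffices key : ∀ h ≤ n, ∀ u : U, u.1 ∈ L h → (G.induce U).Reachable u ⟨v₀, hv₀⟩ by
    obtain ⟨h, hn, hu⟩ := hu
    obtain ⟨h', hn', hv⟩ := hv
    exact (key h hn u hu).trans (key h' hn' v hv).symm
  intro h
  induction h with
  | zero =>
    intro _ u hu
    obtain rfl : u = ⟨v₀, hv₀⟩ := Subtype.ext (by rw [h0] at hu; exact hu)
    rfl
  | succ h ih =>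
    intro hn u hu
    obtain ⟨p, hp, hpu⟩ := hL.exists_parent hu (by omega) (by omega)
    rw [Nat.add_sub_cancel] at hp
    exact (show (G.induce U).Adj u ⟨p, hU h (by omega) hp⟩ from hpu.symm).reachable.trans
      (ih (by omega) _ hp)

lemma IsStableLevelling.exists_even_induced_path_below (hL : G.IsStableLevelling L k) (hk : 2 ≤ k)
    {x y : V} (hx : x ∈ L (k - 1)) (hy : y ∈ L (k - 1)) :
    ∃ q : G.Walk y x, q.IsPath ∧ q.toSubgraph.IsInduced ∧ Even q.length ∧
      ∀ v ∈ q.support, v = x ∨ v = y ∨ ∃ h, h + 2 ≤ k ∧ v ∈ L h := by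
  set U : Set V := {v | v = x ∨ v = y ∨ ∃ h, h + 2 ≤ k ∧ v ∈ L h}
  have hxU : x ∈ U := .inl rfl
  have hyU : y ∈ U := .inr (.inl rfl)
  obtain ⟨px, hpx, hpxx⟩ := hL.1.exists_parent hx (by omega) (by omega)
  obtain ⟨py, hpy, hpyy⟩ := hL.1.exists_parent hy (by omega) (by omega)
  have hpxU : px ∈ U := .inr (.inr ⟨k - 1 - 1, by omega, hpx⟩)
  have hpyU : py ∈ U := .inr (.inr ⟨k - 1 - 1, by omega, hpy⟩)
  have hreach : (G.induce U).Reachable ⟨y, hyU⟩ ⟨x, hxU⟩ := by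
    have hlow : (G.induce U).Reachable ⟨py, hpyU⟩ ⟨px, hpxU⟩ :=
      hL.1.induce_reachable (n := k - 2) (by omega)
        (fun h hh v hv => .inr (.inr ⟨h, by omega, hv⟩))
        ⟨k - 1 - 1, by omega, hpy⟩ ⟨k - 1 - 1, by omega, hpx⟩
    exact (show (G.induce U).Adj ⟨y, hyU⟩ ⟨py, hpyU⟩ from hpyy.symm).reachable.trans <|
      hlow.trans (show (G.induce U).Adj ⟨px, hpxU⟩ ⟨x, hxU⟩ from hpxx).reachable
  obtain ⟨w, hw⟩ := hreach.exists_walk_length_eq_dist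
  let e : G.induce U ↪g G := Embedding.induce U
  have hsupp : ∀ v ∈ (w.map e.toHom).support, v ∈ U := by
    simp only [Walk.support_map, List.mem_map]
    rintro _ ⟨v, -, rfl⟩
    exact v.2
  refine ⟨w.map e.toHom, (w.isPath_of_length_eq_dist hw).map e.injective,
    Walk.isInduced_toSubgraph_map e (Walk.isInduced_toSubgraph_of_length_eq_dist hw), ?_, hsupp⟩
  have hlevel : ∀ v ∈ (w.map e.toHom).support, ∃ h < k, v ∈ L h := by
    intro v hv
    rcases hsupp v hv with rfl | rfl | ⟨h, hh, hv⟩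
    exacts [⟨k - 1, by omega, hx⟩, ⟨k - 1, by omega, hy⟩, ⟨h, by omega, hv⟩]
  have := hL.even_length_add _ hlevel hy hx (by omega) (by omega)
  rw [add_assoc] at this
  exact (Nat.even_add.mp this).mpr ⟨_, rfl⟩

lemma IsStableLevelling.exists_odd_hole_of_induced_path (hg : 5 ≤ G.egirth)
    (hL : G.IsStableLevelling L k) {x y z : V} (hx : x ∈ L (k - 1)) (hy : y ∈ L (k - 1))
    (hxy : x ≠ y) (hz : z ∈ L k) (hxz : G.Adj x z) (hyz : G.Adj y z) (p : G.Walk x y)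
    (hp : p.IsPath) (hpi : p.toSubgraph.IsInduced) (hpo : Odd p.length) (hp5 : 5 ≤ p.length)
    (hpL : ∀ v ∈ p.support, v = x ∨ v = y ∨ v ∈ L k) :
    ∃ n, Odd n ∧ 9 ≤ n ∧ G.HasInducedCycle n := by
  have hk := hL.1.two_le_of_ne hx hy hxy
  obtain ⟨q, hq, hqi, hqe, hqL⟩ := hL.exists_even_induced_path_below hk hx hy
  have hlow : ∀ {u v : V} {h : ℕ}, u ∈ L k → v ∈ L h → h + 2 ≤ k → u ≠ v ∧ ¬G.Adj u v :=
    fun hu hv hh => ⟨hL.1.ne_of_mem hu hv le_rfl (by omega) (by omega),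
      fun huv => hL.1.not_adj_of_add_two_le hv hu hh le_rfl huv.symm⟩
  have hq0 : q.length ≠ 0 := fun h => hxy (q.eq_of_length_eq_zero h).symm
  have hq2 : q.length ≠ 2 := by
    intro h2
    have hym := q.adj_getVert_succ (i := 0) (by omega)
    have hmx := q.adj_getVert_succ (i := 1) (by omega)
    rw [Walk.getVert_zero] at hym
    rw [q.getVert_of_length_le (i := 1 + 1) (by omega)] at hmx
    obtain ⟨h, hh, hm⟩ : ∃ h, h + 2 ≤ k ∧ q.getVert 1 ∈ L h := by
      rcases hqL _ (q.getVert_mem_support 1) with hmx' | hmy | hm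
      exacts [absurd hmx' hmx.ne, absurd hmy hym.ne.symm, hm]
    exact (hlow hz hm hh).1 (eq_of_adj_of_adj hg hxy hmx.symm hym hxz hyz).symm
  obtain ⟨c, hc⟩ := hqe
  refine ⟨p.length + q.length, hc ▸ hpo.add_even ⟨c, rfl⟩, by omega,
    hp.hasInducedCycle_append hq hpi hqi (by omega) fun a ha b hb hax hay hbx hby => ?_⟩
  have hak := (hpL a ha).resolve_left hax |>.resolve_left hay
  obtain ⟨h, hh, hb⟩ := (hqL b hb).resolve_left hbx |>.resolve_left hby
  exact hlow hak hb hh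

lemma IsStableLevelling.exists_odd_hole_of_parents (hg : 5 ≤ G.egirth)
    (hL : G.IsStableLevelling L k) {x y z c₀ c₁ c₂ c₃ : V}
    (hx : x ∈ L (k - 1)) (hy : y ∈ L (k - 1)) (hz : z ∈ L k) (hxz : G.Adj x z) (hyz : G.Adj y z)
    (hc₀ : c₀ ∈ L k) (hc₁ : c₁ ∈ L k) (hc₂ : c₂ ∈ L k) (hc₃ : c₃ ∈ L k)
    (hxc₀ : G.Adj x c₀) (h₀₁ : G.Adj c₀ c₁) (h₁₂ : G.Adj c₁ c₂) (h₂₃ : G.Adj c₂ c₃)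
    (hc₃y : G.Adj c₃ y) (h₀₂ : ¬G.Adj c₀ c₂) (h₀₃ : ¬G.Adj c₀ c₃) (h₁₃ : ¬G.Adj c₁ c₃)
    (hne₀₂ : c₀ ≠ c₂) (hne₁₃ : c₁ ≠ c₃) (hxc₃ : ¬G.Adj x c₃) (hc₀z : c₀ ≠ z) :
    ∃ n, Odd n ∧ 9 ≤ n ∧ G.HasInducedCycle n := by
  have hxy : x ≠ y := by rintro rfl; exact hxc₃ hc₃y.symm
  have hk := hL.1.two_le_of_ne hx hy hxy
  have hne : ∀ {c}, c ∈ L k → x ≠ c ∧ y ≠ c := fun hc =>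
    ⟨hL.1.ne_of_mem hx hc (by omega) le_rfl (by omega),
      hL.1.ne_of_mem hy hc (by omega) le_rfl (by omega)⟩
  have hc₀y : ¬G.Adj c₀ y := fun h => hc₀z (eq_of_adj_of_adj hg hxy hxc₀ h.symm hxz hyz)
  have hxy' : ¬G.Adj x y := hL.2 (k - 1) (by omega) x hx y hy
  have hxc₁ : ¬G.Adj c₁ x := not_adj_of_adj_adj hg hxc₀ h₀₁
  have hxc₂ : ¬G.Adj c₂ x := not_adj_of_adj_adj_adj hg hxc₀ h₀₁ h₁₂ (hne hc₁).1 hne₀₂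
  have hc₁y : ¬G.Adj c₁ y :=
    not_adj_of_adj_adj_adj hg hc₃y.symm h₂₃.symm h₁₂.symm (hne hc₂).2 hne₁₃.symm
  have hc₂y : ¬G.Adj c₂ y := not_adj_of_adj_adj hg hc₃y.symm h₂₃.symm
  have hne₀₃ : c₀ ≠ c₃ := by rintro rfl; exact not_adj_of_adj_adj hg h₀₁ h₁₂ h₂₃
  let p : G.Walk x y := .cons hxc₀ (.cons h₀₁ (.cons h₁₂ (.cons h₂₃ (.cons hc₃y .nil))))
  refine hL.exists_odd_hole_of_induced_path hg hx hy hxy hz hxz hyz p ?_ ?_ ⟨2, rfl⟩ le_rfl ?_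
  · simp [p, Walk.isPath_def, hxy, (hne hc₀).1, (hne hc₁).1, (hne hc₂).1, (hne hc₃).1,
      (hne hc₀).2.symm, (hne hc₁).2.symm, (hne hc₂).2.symm, (hne hc₃).2.symm, h₀₁.ne, h₁₂.ne,
      h₂₃.ne, hne₀₂, hne₀₃, hne₁₃]
  · intro a ha b hb hab
    simp only [p, Walk.mem_verts_toSubgraph, Walk.support_cons, Walk.support_nil, List.mem_cons,
      List.not_mem_nil, or_false] at ha hb
    simp only [p, Walk.toSubgraph, Subgraph.sup_adj, subgraphOfAdj_adj, Sym2.eq, Sym2.rel_iff']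
    have hba := hab.symm
    rcases ha with rfl | rfl | rfl | rfl | rfl | rfl <;>
      rcases hb with rfl | rfl | rfl | rfl | rfl | rfl <;>
      simp_all
  · simp only [p, Walk.support_cons, Walk.support_nil, List.mem_cons, List.not_mem_nil, or_false]
    rintro v (rfl | rfl | rfl | rfl | rfl | rfl) <;> simp_all

lemma IsStableLevelling.exists_odd_hole_of_cycleGraph (hg : 5 ≤ G.egirth)
    (hL : G.IsStableLevelling L k) {m : ℕ} (ψ : cycleGraph m ↪g G) {x y z : V}
    (hψ : ∀ i, ψ i ∈ L k) (hψz : ∀ i, ψ i ≠ z) (hx : x ∈ L (k - 1)) (hy : y ∈ L (k - 1))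
    (hz : z ∈ L k) (hxz : G.Adj x z) (hyz : G.Adj y z) (i₀ i₁ i₂ i₃ : Fin m)
    (h₀₁ : (cycleGraph m).Adj i₀ i₁) (h₁₂ : (cycleGraph m).Adj i₁ i₂)
    (h₂₃ : (cycleGraph m).Adj i₂ i₃) (h₀₂ : ¬(cycleGraph m).Adj i₀ i₂)
    (h₀₃ : ¬(cycleGraph m).Adj i₀ i₃) (h₁₃ : ¬(cycleGraph m).Adj i₁ i₃) (hne₀₂ : i₀ ≠ i₂)
    (hne₁₃ : i₁ ≠ i₃) (hx₀ : G.Adj x (ψ i₀)) (hy₃ : G.Adj y (ψ i₃)) (hx₃ : ¬G.Adj x (ψ i₃)) :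
    ∃ n, Odd n ∧ 9 ≤ n ∧ G.HasInducedCycle n :=
  hL.exists_odd_hole_of_parents hg hx hy hz hxz hyz (hψ i₀) (hψ i₁) (hψ i₂) (hψ i₃) hx₀
    (ψ.map_adj_iff.mpr h₀₁) (ψ.map_adj_iff.mpr h₁₂) (ψ.map_adj_iff.mpr h₂₃) hy₃.symm
    (mt ψ.map_adj_iff.mp h₀₂) (mt ψ.map_adj_iff.mp h₀₃) (mt ψ.map_adj_iff.mp h₁₃)
    (ψ.injective.ne hne₀₂) (ψ.injective.ne hne₁₃) hx₃ (hψz i₀)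

lemma IsStableLevelling.exists_odd_hole_of_cycleGraph_five (hg : 5 ≤ G.egirth)
    (hL : G.IsStableLevelling L k) (hk : 1 ≤ k) (ψ : cycleGraph 5 ↪g G) {z : V}
    (hψ : ∀ i, ψ i ∈ L k) (hψz : ∀ i, ψ i ≠ z) (hz : z ∈ L k)
    (hpar : ∀ i, ∃ u ∈ L (k - 1), G.Adj u (ψ i) ∧ G.Adj u z) :
    ∃ n, Odd n ∧ 9 ≤ n ∧ G.HasInducedCycle n := by
  obtain ⟨x, hx, hx₀, hxz⟩ := hpar 0
  obtain ⟨y, hy, hy₂, hyz⟩ := hpar 2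
  have hx₂ : ¬G.Adj x (ψ 2) := fun h => not_adj_of_adj_adj_adj hg hx₀
    (ψ.map_adj_iff.mpr (by decide)) (ψ.map_adj_iff.mpr (by decide))
    (hL.1.ne_of_mem hx (hψ 1) (by omega) le_rfl (by omega)) (ψ.injective.ne (by decide)) h.symm
  exact hL.exists_odd_hole_of_cycleGraph hg ψ hψ hψz hx hy hz hxz hyz 0 4 3 2
    (by decide) (by decide) (by decide) (by decide) (by decide) (by decide) (by decide)
    (by decide) hx₀ hy₂ hx₂

lemma IsStableLevelling.exists_odd_hole_of_cycleGraph_seven (hg : 5 ≤ G.egirth)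
    (hL : G.IsStableLevelling L k) (ψ : cycleGraph 7 ↪g G) {z : V}
    (hψ : ∀ i, ψ i ∈ L k) (hψz : ∀ i, ψ i ≠ z) (hz : z ∈ L k)
    (hpar : ∀ i, ∃ u ∈ L (k - 1), G.Adj u (ψ i) ∧ G.Adj u z) :
    ∃ n, Odd n ∧ 9 ≤ n ∧ G.HasInducedCycle n := by
  obtain ⟨x, hx, hx₀, hxz⟩ := hpar 0
  have hx₁ : ¬G.Adj x (ψ 1) := fun h =>
    not_adj_of_adj_adj hg h (ψ.map_adj_iff.mpr (by decide)) hx₀.symm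
  have hx₆ : ¬G.Adj x (ψ 6) := fun h =>
    not_adj_of_adj_adj hg h (ψ.map_adj_iff.mpr (by decide)) hx₀.symm
  by_cases hx₃ : G.Adj x (ψ 3)
  · obtain ⟨y, hy, hy₆, hyz⟩ := hpar 6
    exact hL.exists_odd_hole_of_cycleGraph hg ψ hψ hψz hx hy hz hxz hyz 3 4 5 6
      (by decide) (by decide) (by decide) (by decide) (by decide) (by decide) (by decide)
      (by decide) hx₃ hy₆ hx₆
  by_cases hx₄ : G.Adj x (ψ 4)
  · obtain ⟨y, hy, hy₁, hyz⟩ := hpar 1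
    exact hL.exists_odd_hole_of_cycleGraph hg ψ hψ hψz hx hy hz hxz hyz 4 3 2 1
      (by decide) (by decide) (by decide) (by decide) (by decide) (by decide) (by decide)
      (by decide) hx₄ hy₁ hx₁
  obtain ⟨y, hy, hy₄, hyz⟩ := hpar 4
  exact hL.exists_odd_hole_of_cycleGraph hg ψ hψ hψz hx hy hz hxz hyz 0 6 5 4
    (by decide) (by decide) (by decide) (by decide) (by decide) (by decide) (by decide)
    (by decide) hx₀ hy₄ hx₄

lemma IsStableLevelling.exists_odd_hole_of_cycleGraph_of_lt_nine (hg : 5 ≤ G.egirth)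
    (hL : G.IsStableLevelling L k) {m : ℕ} (hm : Odd m) (hm3 : 3 ≤ m) (hm9 : m < 9)
    (ψ : cycleGraph m ↪g G) {z : V} (hψ : ∀ i, ψ i ∈ L k) (hψz : ∀ i, ψ i ≠ z) (hz : z ∈ L k)
    (hpar : ∀ i, ∀ u ∈ L (k - 1), G.Adj u (ψ i) → G.Adj u z) :
    ∃ n, Odd n ∧ 9 ≤ n ∧ G.HasInducedCycle n := by
  have hk : 1 ≤ k := by
    by_contra! hk0
    rw [Nat.lt_one_iff.mp hk0] at hψ
    exact ψ.injective.ne (a₁ := ⟨0, by omega⟩) (a₂ := ⟨1, by omega⟩) (by simp)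
      (hL.1.eq_of_mem_zero (hψ _) (hψ _))
  have hpar' : ∀ i, ∃ u ∈ L (k - 1), G.Adj u (ψ i) ∧ G.Adj u z := fun i => by
    obtain ⟨u, hu, huv⟩ := hL.1.exists_parent (hψ i) hk le_rfl
    exact ⟨u, hu, huv, hpar i u hu huv⟩
  obtain rfl | rfl | rfl : m = 3 ∨ m = 5 ∨ m = 7 := by
    obtain ⟨t, rfl⟩ := hm; omega
  · exact (not_adj_of_adj_adj hg (ψ.map_adj_iff.mpr (by decide : (cycleGraph 3).Adj 0 1))
      (ψ.map_adj_iff.mpr (by decide : (cycleGraph 3).Adj 1 2))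
      (ψ.map_adj_iff.mpr (by decide : (cycleGraph 3).Adj 2 0))).elim
  · exact hL.exists_odd_hole_of_cycleGraph_five hg hk ψ hψ hψz hz hpar'
  · exact hL.exists_odd_hole_of_cycleGraph_seven hg ψ hψ hψz hz hpar'

end Levelling

end SimpleGraph

open SimpleGraph in
theorem stmt_8_general {V : Type*} (G : SimpleGraph V)
    (hgirth : (5 : ℕ∞) ≤ G.egirth)
    (hodd : ∀ n : ℕ, Odd n → 9 ≤ n → ¬ G.HasInducedCycle n)
    (L : ℕ → Set V) (k : ℕ) (hL : G.IsStableLevelling L k)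
    (S : Set V) (hS : S ⊆ L k) (z : ↥S) :
    ((G.induce S).induce {v : ↥S | (G.induce S).dist z v = 3 ∧
        ∀ u ∈ L (k - 1), G.Adj u (v : V) → G.Adj u (z : V)}).chromaticNumber ≤ 2 := by
  set A := {v : ↥S | (G.induce S).dist z v = 3 ∧
    ∀ u ∈ L (k - 1), G.Adj u (v : V) → G.Adj u (z : V)}
  let e : (G.induce S).induce A ↪g G := (Embedding.induce S).comp (Embedding.induce A)
  suffices h : ((G.induce S).induce A).Colorable 2 by exact_mod_cast h.chromaticNumber_le
  refine two_colorable_iff_forall_loop_even.mpr fun u w => Nat.not_odd_iff_even.mp fun hw => ?_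
  obtain ⟨m, hm, hcyc⟩ := w.exists_odd_hasInducedCycle hw
  obtain ⟨n, hn, h9, hhole⟩ : ∃ n, Odd n ∧ 9 ≤ n ∧ G.HasInducedCycle n := by
    by_cases hm9 : 9 ≤ m
    · exact ⟨m, hm, hm9, hcyc.map e⟩
    obtain ⟨φ⟩ := hcyc.cycleGraph_isIndContained
    refine hL.exists_odd_hole_of_cycleGraph_of_lt_nine hgirth hm hcyc.three_le (by omega)
      (e.comp φ) (fun i => hS (φ i).1.2) (fun i h => ?_) (hS z.2) (fun i => (φ i).2.2)
    have hdist := (φ i).2.1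
    rw [show (φ i : ↥S) = z from Subtype.ext h, dist_self] at hdist
    omega
  exact hodd n hn h9 hhole

/-- If `(L 0, …, L k)` is a stable levelling of a graph `G` of girth at least 5 with no odd
hole of length at least 9, `H` is an induced subgraph of `G[L k]`, `z ∈ V(H)`, and `A` is the
set of vertices of `H` at distance exactly 3 from `z` in `H` all of whose parents in `L (k-1)`
are adjacent to `z`, then `H[A]` is 2-colorable. -/
theorem stmt_8 {V : Type*} [Fintype V] (G : SimpleGraph V)
    (hgirth : (5 : ℕ∞) ≤ G.egirth)
    (hodd : ∀ n : ℕ, Odd n → 9 ≤ n → ¬ G.HasInducedCycle n)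
    (L : ℕ → Set V) (k : ℕ) (hL : G.IsStableLevelling L k)
    (S : Set V) (hS : S ⊆ L k) (z : ↥S) :
    ((G.induce S).induce {v : ↥S | (G.induce S).dist z v = 3 ∧
        ∀ u ∈ L (k - 1), G.Adj u (v : V) → G.Adj u (z : V)}).chromaticNumber ≤ 2 :=
  stmt_8_general G hgirth hodd L k hL S hS z
end

section
/- Let G be a triangle-free simple graph with no 5-hole and no 7-hole. Then for every vertex v of G and every i ∈ {1, 2, 3}, the set N^i(v) of vertices at distance exactly i from v is a stable (independent) set of G. -/
/-!
A shortest closed walk of odd length is an induced cycle: a repeated vertex or a chord would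
split it into two shorter closed walks, one of which has odd length. If two adjacent vertices
`x`, `y` are both at distance `i` from `v`, then shortest paths `v → x`, `y → v` and the edge `xy`
form a closed walk of odd length `2i + 1 ≤ 7`, so `G` would contain a triangle, a 5-hole or a
7-hole.
-/

open SimpleGraph

namespace SimpleGraph.Walk

variable {V : Type*} {G : SimpleGraph V}

lemma mk_mem_edges_of_length_eq_one {u v : V} {p : G.Walk u v} (hp : p.length = 1) :
    s(u, v) ∈ p.edges := by
  cases p with
  | nil => simp at hp
  | cons _ q =>
    cases q with
    | nil => simp
    | cons _ _ => simp at hp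

lemma exists_odd_length_lt_of_not_isCycle {u : V} {w : G.Walk u u} (hw : Odd w.length)
    (hcyc : ¬ w.IsCycle) : ∃ (x : V) (c : G.Walk x x), Odd c.length ∧ c.length < w.length := by
  have hlen : w.length ≠ 1 := fun h => G.loopless.irrefl _ (w.adj_of_length_eq_one h)
  cases w with
  | nil => simp at hw
  | cons h p =>
    have hp : ¬ p.IsPath := fun hp => hcyc <| isCycle_iff_isPath_tail_and_le_length.mpr
      ⟨by simpa using hp, by rw [Nat.odd_iff] at hw; omega⟩
    obtain ⟨x, c, ⟨r₁, r₂, rfl⟩, hnil⟩ := by simpa using mt isPath_iff_isSubwalk_imp_nil.mpr hp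
    have hc : 0 < c.length := not_nil_iff_lt_length.mp hnil
    simp only [length_cons, length_append, Nat.odd_iff] at hw ⊢
    by_cases hodd : c.length % 2 = 1
    · exact ⟨x, c, hodd, by omega⟩
    · exact ⟨u, cons h (r₁.append r₂), by simp only [length_cons, length_append]; omega,
        by simp only [length_cons, length_append]; omega⟩

lemma exists_odd_length_lt_of_not_isChordless {u : V} {w : G.Walk u u} (hw : Odd w.length)
    (hchord : ¬ w.IsChordless) :
    ∃ (x : V) (c : G.Walk x x), Odd c.length ∧ c.length < w.length := by
  classical
  obtain ⟨x, y, hx, hy, hxy, hmem⟩ : ∃ x y, x ∈ w.support ∧ y ∈ w.support ∧ G.Adj x y ∧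
      s(x, y) ∉ w.edges := by
    simpa [isChordless_iff_forall_mem_edges] using hchord
  set r := w.rotate x hx
  have hyr : y ∈ r.support := (mem_support_rotate_iff w x hx).mpr hy
  set p₁ := r.takeUntil y hyr
  set p₂ := r.dropUntil y hyr
  have hsum : p₁.length + p₂.length = w.length := by
    rw [← length_append, take_spec, length_rotate]
  have hmem' : s(x, y) ∉ r.edges := fun h => hmem ((rotate_edges w x hx).perm.mem_iff.mp h)
  have h₁ : p₁.length ≠ 1 := fun h =>
    hmem' (edges_takeUntil_subset_edges r hyr (mk_mem_edges_of_length_eq_one h))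
  have h₂ : p₂.length ≠ 1 := fun h =>
    hmem' (edges_dropUntil_subset_edges r hyr (Sym2.eq_swap ▸ mk_mem_edges_of_length_eq_one h))
  have h₁' : p₁.length ≠ 0 := fun h => hxy.ne (eq_of_length_eq_zero h)
  have h₂' : p₂.length ≠ 0 := fun h => hxy.ne (eq_of_length_eq_zero h).symm
  rw [Nat.odd_iff] at hw
  by_cases hodd : p₁.length % 2 = 0
  · exact ⟨x, p₁.concat hxy.symm, by rw [length_concat, Nat.odd_iff]; omega,
      by rw [length_concat]; omega⟩
  · exact ⟨y, p₂.concat hxy, by rw [length_concat, Nat.odd_iff]; omega,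
      by rw [length_concat]; omega⟩

theorem exists_isCycle_isChordless_odd_length_le {u : V} (w : G.Walk u u) (hw : Odd w.length) :
    ∃ (x : V) (c : G.Walk x x), c.IsCycle ∧ c.IsChordless ∧ Odd c.length ∧
      c.length ≤ w.length := by
  induction hn : w.length using Nat.strong_induction_on generalizing u with
  | _ n ih =>
  subst hn
  by_cases hc : w.IsCycle ∧ w.IsChordless
  · exact ⟨u, w, hc.1, hc.2, hw, le_rfl⟩
  obtain ⟨x, c, hodd, hlt⟩ : ∃ (x : V) (c : G.Walk x x), Odd c.length ∧ c.length < w.length := by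
    rcases not_and_or.mp hc with hcyc | hchord
    · exact exists_odd_length_lt_of_not_isCycle hw hcyc
    · exact exists_odd_length_lt_of_not_isChordless hw hchord
  obtain ⟨y, d, hd, hdc, hdodd, hdle⟩ := ih _ hlt c hodd rfl
  exact ⟨y, d, hd, hdc, hdodd, hdle.trans hlt.le⟩

end SimpleGraph.Walk

namespace SimpleGraph

variable {V : Type*} {G : SimpleGraph V}

lemma exists_hasInducedCycle_odd_le_length {u : V} (w : G.Walk u u) (hw : Odd w.length) :
    ∃ k, Odd k ∧ 3 ≤ k ∧ k ≤ w.length ∧ G.HasInducedCycle k := by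
  obtain ⟨x, c, hc, hchord, hodd, hle⟩ := w.exists_isCycle_isChordless_odd_length_le hw
  exact ⟨c.length, hodd, hc.three_le_length, hle, x, c, hc, rfl,
    Walk.isInduced_toSubgraph.mpr hchord⟩

lemma CliqueFree.not_hasInducedCycle_three (h : G.CliqueFree 3) : ¬ G.HasInducedCycle 3 := by
  classical
  rintro ⟨u, c, -, hlen, -⟩
  have hadj (i : ℕ) (hi : i < 3) : G.Adj (c.getVert i) (c.getVert (i + 1)) :=
    c.adj_getVert_succ (by omega)
  have hu : c.getVert 3 = u := hlen ▸ c.getVert_length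
  refine h {u, c.getVert 1, c.getVert 2} (is3Clique_triple_iff.mpr ⟨?_, ?_, ?_⟩)
  · simpa using hadj 0 (by norm_num)
  · simpa [hu] using (hadj 2 (by norm_num)).symm
  · exact hadj 1 (by norm_num)

lemma not_adj_of_dist_eq_of_not_hasInducedCycle {v x y : V} {i : ℕ} (hi : i ≠ 0)
    (hcyc : ∀ k, Odd k → 3 ≤ k → k ≤ 2 * i + 1 → ¬ G.HasInducedCycle k)
    (hx : G.dist v x = i) (hy : G.dist v y = i) : ¬ G.Adj x y := by
  intro hxy
  obtain ⟨p, hp⟩ := exists_walk_of_dist_ne_zero (hx ▸ hi)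
  obtain ⟨q, hq⟩ := exists_walk_of_dist_ne_zero (hy ▸ hi)
  have hlen : ((p.concat hxy).append q.reverse).length = 2 * i + 1 := by
    simp only [Walk.length_append, Walk.length_concat, Walk.length_reverse]
    omega
  obtain ⟨k, hodd, hk3, hk, hk_cyc⟩ :=
    exists_hasInducedCycle_odd_le_length _ (hlen ▸ odd_two_mul_add_one i)
  exact hcyc k hodd hk3 (hlen ▸ hk) hk_cyc

end SimpleGraph

theorem stmt_18_general {V : Type*} (G : SimpleGraph V)
    (htri : G.CliqueFree 3)
    (h5 : ¬ G.HasInducedCycle 5)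
    (h7 : ¬ G.HasInducedCycle 7)
    (v : V) (i : ℕ) (hi : i ∈ ({1, 2, 3} : Set ℕ)) :
    ∀ x : V, G.dist v x = i → ∀ y : V, G.dist v y = i → ¬ G.Adj x y := by
  simp only [Set.mem_insert_iff, Set.mem_singleton_iff] at hi
  intro x hx y hy
  refine not_adj_of_dist_eq_of_not_hasInducedCycle (by omega) (fun k hodd hk3 hk => ?_) hx hy
  obtain rfl | rfl | rfl : k = 3 ∨ k = 5 ∨ k = 7 := by rw [Nat.odd_iff] at hodd; omega
  exacts [htri.not_hasInducedCycle_three, h5, h7]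

/-- In a triangle-free graph with no 5-hole and no 7-hole, for each `i ∈ {1, 2, 3}` the set
of vertices at distance exactly `i` from any vertex `v` is a stable (independent) set. -/
theorem stmt_18 {V : Type*} [Fintype V] (G : SimpleGraph V)
    (htri : G.CliqueFree 3)
    (h5 : ¬ G.HasInducedCycle 5)
    (h7 : ¬ G.HasInducedCycle 7)
    (v : V) (i : ℕ) (hi : i ∈ ({1, 2, 3} : Set ℕ)) :
    ∀ x : V, G.dist v x = i → ∀ y : V, G.dist v y = i → ¬ G.Adj x y :=
  stmt_18_general G htri h5 h7 v i hi
end
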